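/- For 2 ≤ P ≤ X and any s with Re(s) = 1/2 + 1/log X, one has ∑_{P ≤ p ≤ 2P} p^{-s} = ∫_{1/log X}^{1/2} (∑_{P ≤ n ≤ 2P} Λ(n) n^{-(1/2 + α + i·Im s)}) dα + O(1), where the sum on the left is over primes and Λ is the von Mangoldt function. -/

import Mathlib

open Real Complex MeasureTheory Finset
open scoped ArithmeticFunction

/-!
Integrating in `α` turns `Λ(n) n^{-(1/2 + α + it)}` into `(Λ(n) / log n) (n^{-s} - n^{-1-it})`.
Since `Λ(p) / log p = 1` for primes, the prime sum cancels up to `∑_{P ≤ p ≤ 2P} p^{-1-it}`,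
which is at most `2` in norm. What is left comes from the `O(√P)` prime powers `p^k`, `k ≥ 2`, in
`[P, 2P]`, each contributing `O(P^{-1/2})`.
-/

lemma integral_cpow_neg_add {x : ℂ} (hx : x ≠ 0) (hlog : Complex.log x ≠ 0) (z : ℂ) (a b : ℝ) :
    ∫ α in a..b, x ^ (-(z + α)) = (x ^ (-(z + a)) - x ^ (-(z + b))) / Complex.log x := by
  have h (α : ℂ) : x ^ (-(z + α)) = x ^ (-z) * Complex.exp (-Complex.log x * α) := by
    rw [cpow_def_of_ne_zero hx, cpow_def_of_ne_zero hx, ← Complex.exp_add]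
    ring_nf
  simp_rw [h, intervalIntegral.integral_const_mul, integral_exp_mul_complex (neg_ne_zero.2 hlog)]
  field_simp
  ring

lemma integral_vonMangoldt_mul_cpow (n : ℕ) (z : ℂ) (a b : ℝ) :
    ∫ α in a..b, (Λ n : ℂ) * (n : ℂ) ^ (-(z + α)) =
      ((Λ n / Real.log n : ℝ) : ℂ) * ((n : ℂ) ^ (-(z + a)) - (n : ℂ) ^ (-(z + b))) := by
  rw [intervalIntegral.integral_const_mul]
  rcases eq_or_ne (Λ n) 0 with hΛ | hΛ
  · simp [hΛ]
  have hn : 1 < n := (ArithmeticFunction.vonMangoldt_ne_zero_iff.1 hΛ).one_lt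
  have hlog : Real.log n ≠ 0 := (Real.log_pos (by exact_mod_cast hn)).ne'
  rw [integral_cpow_neg_add (by exact_mod_cast (zero_lt_one.trans hn).ne') (by
    rw [← Complex.natCast_log]; exact_mod_cast hlog), ← Complex.natCast_log]
  push_cast
  ring

lemma integral_sum_vonMangoldt_mul_cpow (I : Finset ℕ) (z : ℂ) (a b : ℝ) :
    ∫ α in a..b, ∑ n ∈ I, (Λ n : ℂ) * (n : ℂ) ^ (-(z + α)) =
      ∑ n ∈ I, ((Λ n / Real.log n : ℝ) : ℂ) * ((n : ℂ) ^ (-(z + a)) - (n : ℂ) ^ (-(z + b))) := by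
  rw [intervalIntegral.integral_finsetSum fun n _ => ?_]
  · exact sum_congr rfl fun n _ => integral_vonMangoldt_mul_cpow n z a b
  rcases eq_or_ne n 0 with rfl | hn
  · simp
  exact (continuous_const.mul ((by fun_prop : Continuous fun α : ℝ => -(z + α)).const_cpow
    (Or.inl (by exact_mod_cast hn)))).intervalIntegrable a b

lemma vonMangoldt_div_log_of_prime {p : ℕ} (hp : p.Prime) : Λ p / Real.log p = 1 := by
  rw [ArithmeticFunction.vonMangoldt_apply_prime hp]
  exact div_self (Real.log_pos (by exact_mod_cast hp.one_lt)).ne'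

lemma sum_prime_cpow_sub_sum_vonMangoldt (I : Finset ℕ) (s w : ℂ) :
    ∑ p ∈ I.filter Nat.Prime, (p : ℂ) ^ (-s)
        - ∑ n ∈ I, ((Λ n / Real.log n : ℝ) : ℂ) * ((n : ℂ) ^ (-s) - (n : ℂ) ^ (-w)) =
      ∑ p ∈ I.filter Nat.Prime, (p : ℂ) ^ (-w)
        - ∑ n ∈ I with ¬ n.Prime ∧ IsPrimePow n,
            ((Λ n / Real.log n : ℝ) : ℂ) * ((n : ℂ) ^ (-s) - (n : ℂ) ^ (-w)) := by
  have h_prime : ∑ p ∈ I.filter Nat.Prime,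
      ((Λ p / Real.log p : ℝ) : ℂ) * ((p : ℂ) ^ (-s) - (p : ℂ) ^ (-w)) =
        ∑ p ∈ I.filter Nat.Prime, ((p : ℂ) ^ (-s) - (p : ℂ) ^ (-w)) :=
    sum_congr rfl fun p hp => by
      rw [vonMangoldt_div_log_of_prime (mem_filter.1 hp).2, ofReal_one, one_mul]
  have h_primePow : ∑ n ∈ I with ¬ n.Prime ∧ IsPrimePow n,
      ((Λ n / Real.log n : ℝ) : ℂ) * ((n : ℂ) ^ (-s) - (n : ℂ) ^ (-w)) =
        ∑ n ∈ I with ¬ n.Prime,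
          ((Λ n / Real.log n : ℝ) : ℂ) * ((n : ℂ) ^ (-s) - (n : ℂ) ^ (-w)) := by
    rw [← filter_filter]
    refine sum_filter_of_ne fun n _ h => ?_
    contrapose! h
    simp [ArithmeticFunction.vonMangoldt_eq_zero_iff.2 h]
  rw [← sum_filter_add_sum_filter_not I Nat.Prime, h_prime, h_primePow, sum_sub_distrib]
  ring

/-- For `n = p ^ k` take `m = p ^ (k / 2)`; when `k` is odd, `k ≥ 3` makes `m.minFac = p`. -/
lemma exists_le_sqrt_eq_sq_or_minFac_mul_sq {n N : ℕ} (hnp : ¬ n.Prime) (hn : IsPrimePow n)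
    (hnN : n ≤ N) : ∃ m ≤ Nat.sqrt N, n = m ^ 2 ∨ n = m.minFac * m ^ 2 := by
  obtain ⟨p, k, hp, hk, rfl⟩ := hn
  rw [← Nat.prime_iff] at hp
  have hk1 : k ≠ 1 := by rintro rfl; exact hnp (by simpa using hp)
  obtain ⟨j, rfl | rfl⟩ := Nat.even_or_odd' k
  · refine ⟨p ^ j, Nat.le_sqrt'.2 ?_, Or.inl (by ring)⟩
    calc (p ^ j) ^ 2 = p ^ (2 * j) := by ring
      _ ≤ N := hnN
  · refine ⟨p ^ j, Nat.le_sqrt'.2 ?_, Or.inr ?_⟩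
    · calc (p ^ j) ^ 2 ≤ p ^ (2 * j + 1) := by
            rw [← pow_mul, mul_comm]; exact Nat.pow_le_pow_right hp.pos (by omega)
        _ ≤ N := hnN
    · rw [hp.pow_minFac (by omega)]
      ring

lemma card_filter_not_prime_isPrimePow_le (N : ℕ) :
    #{n ∈ Iic N | ¬ n.Prime ∧ IsPrimePow n} ≤ 2 * Nat.sqrt N + 2 := by
  set M := range (Nat.sqrt N + 1)
  have h_sub : {n ∈ Iic N | ¬ n.Prime ∧ IsPrimePow n} ⊆
      M.image (· ^ 2) ∪ M.image fun m => m.minFac * m ^ 2 := by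
    intro n hn
    obtain ⟨hnN, hnp, hn⟩ := mem_filter.1 hn
    obtain ⟨m, hm, rfl | rfl⟩ :=
      exists_le_sqrt_eq_sq_or_minFac_mul_sq hnp hn (mem_Iic.1 hnN)
    · exact mem_union_left _ (mem_image_of_mem _ (mem_range.2 (Nat.lt_succ_of_le hm)))
    · exact mem_union_right _ (mem_image_of_mem _ (mem_range.2 (Nat.lt_succ_of_le hm)))
  calc _ ≤ #(M.image (· ^ 2)) + #(M.image fun m => m.minFac * m ^ 2) :=
        (card_le_card h_sub).trans (card_union_le _ _)
    _ ≤ #M + #M := add_le_add card_image_le card_image_le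
    _ = 2 * Nat.sqrt N + 2 := by rw [card_range]; ring

lemma norm_natCast_cpow_neg_le {n : ℕ} {P σ : ℝ} (hP : 0 < P) (hPn : P ≤ n) (hσ : 0 ≤ σ)
    {w : ℂ} (hw : σ ≤ w.re) : ‖(n : ℂ) ^ (-w)‖ ≤ P ^ (-σ) := by
  have hn : (1 : ℝ) ≤ n := Nat.one_le_cast.2 (Nat.cast_pos.1 (hP.trans_le hPn))
  rw [norm_natCast_cpow_of_pos (by exact_mod_cast zero_lt_one.trans_le hn), neg_re]
  calc (n : ℝ) ^ (-w.re) ≤ (n : ℝ) ^ (-σ) := Real.rpow_le_rpow_of_exponent_le hn (by linarith)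
    _ ≤ P ^ (-σ) := Real.rpow_le_rpow_of_nonpos hP hPn (by linarith)

lemma norm_sum_filter_Icc_cpow_neg_le {P : ℝ} (hP : 0 < P) {w : ℂ} (hw : 1 ≤ w.re)
    (q : ℕ → Prop) [DecidablePred q] :
    ‖∑ n ∈ (Icc ⌈P⌉₊ ⌊2 * P⌋₊).filter q, (n : ℂ) ^ (-w)‖ ≤ 2 := by
  have h_card : (#((Icc ⌈P⌉₊ ⌊2 * P⌋₊).filter q) : ℝ) ≤ 2 * P := by
    have h : #((Icc ⌈P⌉₊ ⌊2 * P⌋₊).filter q) ≤ ⌊2 * P⌋₊ := by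
      have := card_filter_le (Icc ⌈P⌉₊ ⌊2 * P⌋₊) q
      have := Nat.one_le_iff_ne_zero.2 (Nat.ceil_pos.2 hP).ne'
      rw [Nat.card_Icc] at *
      omega
    exact (Nat.cast_le.2 h).trans (Nat.floor_le (by positivity))
  calc _ ≤ ∑ n ∈ (Icc ⌈P⌉₊ ⌊2 * P⌋₊).filter q, P ^ (-1 : ℝ) :=
        (norm_sum_le _ _).trans <| sum_le_sum fun n hn =>
          norm_natCast_cpow_neg_le hP
            ((Nat.le_ceil P).trans (by exact_mod_cast (mem_Icc.1 (mem_filter.1 hn).1).1))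
            zero_le_one hw
    _ ≤ 2 * P * P ^ (-1 : ℝ) := by
        rw [sum_const, nsmul_eq_mul]; gcongr
    _ = 2 := by rw [Real.rpow_neg_one]; field_simp

lemma norm_vonMangoldt_div_log_mul_sub_le {n : ℕ} {P : ℝ} (hP : 0 < P) (hPn : P ≤ n) {s w : ℂ}
    (hs : 1 / 2 ≤ s.re) (hw : 1 / 2 ≤ w.re) :
    ‖((Λ n / Real.log n : ℝ) : ℂ) * ((n : ℂ) ^ (-s) - (n : ℂ) ^ (-w))‖ ≤ 2 * (√P)⁻¹ := by
  have h_log := Real.log_natCast_nonneg n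
  have h_coeff : |Λ n / Real.log n| ≤ 1 := by
    rw [abs_of_nonneg (div_nonneg ArithmeticFunction.vonMangoldt_nonneg h_log)]
    exact div_le_one_of_le₀ ArithmeticFunction.vonMangoldt_le_log h_log
  have h_pow (v : ℂ) (hv : 1 / 2 ≤ v.re) : ‖(n : ℂ) ^ (-v)‖ ≤ (√P)⁻¹ := by
    rw [Real.sqrt_eq_rpow, ← Real.rpow_neg hP.le]
    exact norm_natCast_cpow_neg_le hP hPn (by norm_num) hv
  rw [norm_mul, Complex.norm_real, Real.norm_eq_abs]
  calc _ ≤ 1 * (‖(n : ℂ) ^ (-s)‖ + ‖(n : ℂ) ^ (-w)‖) :=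
        mul_le_mul h_coeff (norm_sub_le _ _) (norm_nonneg _) zero_le_one
    _ ≤ 2 * (√P)⁻¹ := by linarith [h_pow s hs, h_pow w hw]

lemma norm_sum_filter_not_prime_isPrimePow_le {P : ℝ} (hP : 1 ≤ P) {s w : ℂ}
    (hs : 1 / 2 ≤ s.re) (hw : 1 / 2 ≤ w.re) :
    ‖∑ n ∈ Icc ⌈P⌉₊ ⌊2 * P⌋₊ with ¬ n.Prime ∧ IsPrimePow n,
        ((Λ n / Real.log n : ℝ) : ℂ) * ((n : ℂ) ^ (-s) - (n : ℂ) ^ (-w))‖ ≤ 10 := by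
  have hP0 : 0 < P := by linarith
  have h_card :
      (#{n ∈ Icc ⌈P⌉₊ ⌊2 * P⌋₊ | ¬ n.Prime ∧ IsPrimePow n} : ℝ) ≤ 2 * √(2 * P) + 2 := by
    have h := (card_le_card (filter_subset_filter _ (Icc_subset_Iic_self (a := ⌈P⌉₊)))).trans
      (card_filter_not_prime_isPrimePow_le ⌊2 * P⌋₊)
    have h_sqrt : (Nat.sqrt ⌊2 * P⌋₊ : ℝ) ≤ √(2 * P) :=
      Real.nat_sqrt_le_real_sqrt.trans (Real.sqrt_le_sqrt (Nat.floor_le (by positivity)))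
    calc _ ≤ ((2 * Nat.sqrt ⌊2 * P⌋₊ + 2 : ℕ) : ℝ) := by exact_mod_cast h
      _ ≤ 2 * √(2 * P) + 2 := by push_cast; linarith
  have h_sqrtP : 1 ≤ √P := Real.one_le_sqrt.2 hP
  calc _ ≤ ∑ n ∈ Icc ⌈P⌉₊ ⌊2 * P⌋₊ with ¬ n.Prime ∧ IsPrimePow n, 2 * (√P)⁻¹ :=
        (norm_sum_le _ _).trans <| sum_le_sum fun n hn =>
          norm_vonMangoldt_div_log_mul_sub_le hP0
            ((Nat.le_ceil P).trans (by exact_mod_cast (mem_Icc.1 (mem_filter.1 hn).1).1)) hs hw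
    _ ≤ (2 * √(2 * P) + 2) * (2 * (√P)⁻¹) := by
        rw [sum_const, nsmul_eq_mul]; gcongr
    _ = 4 * √2 + 4 * (√P)⁻¹ := by
        rw [Real.sqrt_mul zero_le_two]; field_simp; ring
    _ ≤ 10 := by
        have : √2 < 1.5 := by rw [Real.sqrt_lt' (by norm_num)]; norm_num
        have : (√P)⁻¹ ≤ 1 := inv_le_one_of_one_le₀ h_sqrtP
        linarith

/-- The sum over primes `P ≤ p ≤ 2P` of `p^{-s}` with `Re s = 1/2 + 1/log X` equals the
integral over `α ∈ [1/log X, 1/2]` of the von Mangoldt Dirichlet polynomial, up to `O(1)`. -/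
theorem prime_sum_integral_identity :
    ∃ C : ℝ, 0 < C ∧ ∀ (P X : ℝ), 2 ≤ P → P ≤ X → ∀ s : ℂ,
      s.re = 1 / 2 + 1 / Real.log X →
      ‖(∑ p ∈ (Finset.Icc ⌈P⌉₊ ⌊2 * P⌋₊).filter Nat.Prime, (p : ℂ) ^ (-s))
        - ∫ α in (1 / Real.log X)..(1 / 2 : ℝ),
            ∑ n ∈ Finset.Icc ⌈P⌉₊ ⌊2 * P⌋₊,
              ((Λ n : ℝ) : ℂ) * (n : ℂ) ^ (-((1 / 2 : ℂ) + (α : ℂ) + Complex.I * s.im))‖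
      ≤ C := by
  refine ⟨12, by norm_num, fun P X hP hPX s hs => ?_⟩
  have hlogX : 0 < Real.log X := Real.log_pos (by linarith)
  set z : ℂ := 1 / 2 + Complex.I * s.im
  have hs_eq : z + ((1 / Real.log X : ℝ) : ℂ) = s := by
    apply Complex.ext <;> simp [z, hs]
  have h_one : z + ((1 / 2 : ℝ) : ℂ) = 1 + Complex.I * s.im := by
    push_cast; ring
  simp_rw [add_right_comm (1 / 2 : ℂ) _ (Complex.I * s.im)]
  rw [integral_sum_vonMangoldt_mul_cpow, hs_eq, h_one, sum_prime_cpow_sub_sum_vonMangoldt]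
  have hs_re : 1 / 2 ≤ s.re := by rw [hs]; linarith [one_div_pos.2 hlogX]
  calc _ ≤ 2 + 10 := (norm_sub_le _ _).trans (add_le_add
        (norm_sum_filter_Icc_cpow_neg_le (by linarith) (by simp) _)
        (norm_sum_filter_not_prime_isPrimePow_le (by linarith) hs_re (by norm_num)))
    _ = 12 := by norm_num
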